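/- Let G = (V,E) be a finite connected simple graph and let v0 be a fixed vertex. The number of acyclic v0-connected orientations of G equals Σ_{S ⊆ E, (V,S) connected} (−1)^{|S| + 1 − |V|}, the sum being over the connected spanning subgraphs of G. (This sum is the Tutte polynomial evaluation T_G(1,0) via the subgraph expansion.) -/

import Mathlib

/-- An orientation of a simple graph: a choice of direction for each edge. -/
structure GraphOrientation {V : Type*} (G : SimpleGraph V) where
  dir : V → V → Prop
  adj_of_dir : ∀ u v, dir u v → G.Adj u v
  dir_iff_not : ∀ u v, G.Adj u v → (dir u v ↔ ¬ dir v u)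

namespace GraphOrientation

variable {V : Type*} {G : SimpleGraph V}

/-- The outdegree of a vertex: the number of edges directed away from it. -/
noncomputable def outDegree (O : GraphOrientation G) (v : V) : ℕ :=
  {u | O.dir v u}.ncard

/-- `v` is reachable from `u` by a directed path. -/
def Reaches (O : GraphOrientation G) : V → V → Prop :=
  Relation.ReflTransGen O.dir

/-- `C` is the edge set of a directed cycle of the orientation. -/
def IsDirCycle (O : GraphOrientation G) (C : Set (Sym2 V)) : Prop :=
  ∃ (v : V) (w : G.Walk v v), w.IsCycle ∧
    (∀ d ∈ w.darts, O.dir d.toProd.1 d.toProd.2) ∧ C = {e | e ∈ w.edges}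

/-- The orientation is strongly connected. -/
def IsStronglyConnected (O : GraphOrientation G) : Prop := ∀ u v, O.Reaches u v

/-- Every vertex is reachable from `v0`. -/
def IsConnectedFrom (O : GraphOrientation G) (v0 : V) : Prop := ∀ v, O.Reaches v0 v

/-- The set of edges on which two orientations differ. -/
def diffSet (O O' : GraphOrientation G) : Set (Sym2 V) :=
  {e | ∃ a b, e = s(a, b) ∧ O.dir a b ∧ O'.dir b a}

/-- `O'` is obtained from `O` by reversing exactly the edges of `A`. -/
def IsFlipOn (O O' : GraphOrientation G) (A : Set (Sym2 V)) : Prop :=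
  (∀ u v, s(u, v) ∈ A → (O'.dir u v ↔ O.dir v u)) ∧
    (∀ u v, s(u, v) ∉ A → (O'.dir u v ↔ O.dir u v))

/-- One cycle-flip step. -/
def CycleFlip (O O' : GraphOrientation G) : Prop :=
  ∃ C, O.IsDirCycle C ∧ O.IsFlipOn O' C

end GraphOrientation

/-- The cut defined by a vertex subset `U`: edges with exactly one endpoint in `U`. -/
def SimpleGraph.cutSet {V : Type*} (G : SimpleGraph V) (U : Set V) : Set (Sym2 V) :=
  {e | ∃ a b, e = s(a, b) ∧ G.Adj a b ∧ a ∈ U ∧ b ∉ U}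

/-- A cocycle: a minimal nonempty cut. -/
def SimpleGraph.IsCocycle {V : Type*} (G : SimpleGraph V) (D : Set (Sym2 V)) : Prop :=
  D.Nonempty ∧ (∃ U : Set V, D = G.cutSet U) ∧
    ∀ D' : Set (Sym2 V), D'.Nonempty → (∃ U : Set V, D' = G.cutSet U) → D' ⊆ D → D' = D

/-- A directed cocycle: a cocycle all of whose edges are directed toward the same side. -/
def GraphOrientation.IsDirCocycle {V : Type*} {G : SimpleGraph V}
    (O : GraphOrientation G) (D : Set (Sym2 V)) : Prop :=
  G.IsCocycle D ∧ ∃ U : Set V, D = G.cutSet U ∧ ∀ a b, O.dir a b → s(a, b) ∈ D → b ∈ U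

/-- The excess of a subset of vertices with respect to `δ : V → ℕ`. -/
noncomputable def SimpleGraph.excess {V : Type*} (G : SimpleGraph V) (δ : V → ℕ)
    (U : Finset V) : ℤ :=
  (∑ u ∈ U, (δ u : ℤ)) - ({e | e ∈ G.edgeSet ∧ ∀ x ∈ e, x ∈ U} : Set (Sym2 V)).ncard

/-- `C` is the edge set of a cycle of `G`. -/
def SimpleGraph.IsCycleEdgeSet {V : Type*} (G : SimpleGraph V) (C : Set (Sym2 V)) : Prop :=
  ∃ (v : V) (w : G.Walk v v), w.IsCycle ∧ C = {e | e ∈ w.edges}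

/-- The number of connected components of the spanning subgraph `(V, S)`. -/
noncomputable def numComponents (V : Type*) (S : Set (Sym2 V)) : ℕ :=
  Nat.card (SimpleGraph.fromEdgeSet S).ConnectedComponent

/-!
Deletion–contraction on an edge `e = s(v0, u)`. In an acyclic orientation in which every vertex
is reachable from `v0`, the root `v0` is a source, so `e` points to `u`. If `u` has a second
in-neighbour, deleting `e` leaves such an orientation of `G \ e`; conversely every such orientation
of `G \ e` extends by `v0 → u`. Otherwise `e` is the only edge entering `{v0, u}`, so contracting
`e` gives such an orientation of `G / e` rooted at the merged vertex, and these lift back. Hence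
the count `a(G)` satisfies `a(G) = a(G \ e) + a(G / e)`.

The signed count `C(E) = ∑_{S ⊆ E connected} (-1)^|S|` satisfies `C(G) = C(G \ e) - C(G / e)`: a
set `S ∋ e` is connected iff its image in `G / e` is. Contraction merges parallel edges, but each
merged class contributes `∑_{∅ ≠ X} (-1)^|X| = -1`, as a single edge would. When `v0` is isolated
both counts are `1` or `0`, so induction on the number of edges gives `a(G) = (-1)^(|V|+1) C(G)`.
-/

open Relation SimpleGraph

namespace Relation

variable {α β : Type*} {r s : α → α → Prop}

theorem ReflTransGen.eq_of_forall_not_rel {a b : α} (ha : ∀ c, ¬ r a c)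
    (h : ReflTransGen r a b) : b = a := by
  rcases h.cases_head with rfl | ⟨c, hac, -⟩
  · rfl
  · exact absurd hac (ha c)

theorem ReflTransGen.or_of_le_adjoin {p q : α} (hs : ∀ x y, s x y → r x y ∨ x = p ∧ y = q)
    {a b : α} (h : ReflTransGen s a b) : ReflTransGen r a b ∨ ReflTransGen s q b := by
  induction h with
  | refl => exact .inl .refl
  | tail _ hcb ih =>
    rcases hs _ _ hcb with hr | ⟨rfl, rfl⟩
    · exact ih.imp (·.tail hr) (·.tail hcb)
    · exact .inr .refl

theorem ReflTransGen.of_map {r' : β → β → Prop} {f : α → β} {a b : α}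
    (hlift : ∀ c d, r' c d → ∃ x y, f x = c ∧ f y = d ∧ r x y)
    (hfiber : ∀ x y, f x = f y → ReflTransGen r a x → ReflTransGen r a y)
    (h : ReflTransGen r' (f a) (f b)) : ReflTransGen r a b := by
  suffices ∀ d, ReflTransGen r' (f a) d → ∀ y, f y = d → ReflTransGen r a y from this _ h b rfl
  intro d hd
  induction hd with
  | refl => exact fun y hy => hfiber a y hy.symm .refl
  | tail _ hcd ih =>
    obtain ⟨x, y', hx, hy', hxy'⟩ := hlift _ _ hcd
    exact fun y hy => hfiber y' y (hy'.trans hy.symm) ((ih x hx).tail hxy')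

theorem TransGen.restrict_of_forall_not_rel {p : α} (hp : ∀ a, ¬ r a p) {a b : α}
    (h : TransGen r a b) (ha : a ≠ p) : TransGen (fun x y => r x y ∧ x ≠ p) a b := by
  induction h using TransGen.head_induction_on with
  | single hab => exact .single ⟨hab, ha⟩
  | head hac _ ih => exact .head ⟨hac, ha⟩ (ih fun hc => hp _ (hc ▸ hac))

end Relation

namespace GraphOrientation

variable {V : Type*} {G : SimpleGraph V} (O : GraphOrientation G)

@[ext]
theorem ext {O O' : GraphOrientation G} (h : ∀ a b, O.dir a b ↔ O'.dir a b) : O = O' := by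
  cases O; cases O'
  congr
  funext a b
  exact propext (h a b)

def ofTotal (r : V → V → Prop) (adj : ∀ a b, r a b → G.Adj a b)
    (asymm : ∀ a b, r a b → ¬ r b a) (total : ∀ a b, G.Adj a b → r a b ∨ r b a) :
    GraphOrientation G where
  dir := r
  adj_of_dir := adj
  dir_iff_not a b hab := ⟨asymm a b, (total a b hab).resolve_right⟩

theorem asymm {a b : V} (h : O.dir a b) : ¬ O.dir b a :=
  (O.dir_iff_not a b (O.adj_of_dir a b h)).mp h

theorem irrefl (a : V) : ¬ O.dir a a := fun h => O.asymm h h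

theorem dir_or_dir {a b : V} (h : G.Adj a b) : O.dir a b ∨ O.dir b a := by
  by_cases hab : O.dir a b
  · exact .inl hab
  · exact .inr ((O.dir_iff_not b a h.symm).mpr hab)

instance [Finite V] : Finite (GraphOrientation G) :=
  Finite.of_injective GraphOrientation.dir fun _ _ h => ext fun a b => by rw [h]

def IsAcyclic : Prop := ∀ x, ¬ TransGen O.dir x x

theorem reflTransGen_of_walk {a b : V} (w : G.Walk a b)
    (hw : ∀ d ∈ w.darts, O.dir d.toProd.1 d.toProd.2) : ReflTransGen O.dir a b := by
  induction w with
  | nil => exact .refl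
  | cons h p ih =>
    simp only [Walk.darts_cons, List.mem_cons, forall_eq_or_imp] at hw
    exact .head hw.1 (ih hw.2)

theorem exists_walk_of_reflTransGen {a b : V} (h : ReflTransGen O.dir a b) :
    ∃ w : G.Walk a b, ∀ d ∈ w.darts, O.dir d.toProd.1 d.toProd.2 := by
  induction h using ReflTransGen.head_induction_on with
  | refl => exact ⟨.nil, by simp⟩
  | head hac _ ih =>
    obtain ⟨w, hw⟩ := ih
    exact ⟨.cons (O.adj_of_dir _ _ hac) w, by simpa [hac] using hw⟩

theorem exists_isDirCycle_of_transGen {x : V} (h : TransGen O.dir x x) :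
    ∃ C, O.IsDirCycle C := by
  classical
  obtain ⟨y, hxy, hyx⟩ := TransGen.head'_iff.mp h
  obtain ⟨w, hw⟩ := O.exists_walk_of_reflTransGen hyx
  have hpath := w.bypass_isPath
  have hdir : ∀ d ∈ w.bypass.darts, O.dir d.toProd.1 d.toProd.2 :=
    fun d hd => hw d (w.darts_bypass_subset_darts hd)
  have hcycle : (Walk.cons (O.adj_of_dir _ _ hxy) w.bypass).IsCycle := by
    refine (Walk.cons_isCycle_iff _ _).mpr ⟨hpath, fun he => ?_⟩
    obtain ⟨d, hd, hde⟩ := List.mem_map.mp he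
    rcases Sym2.eq_iff.mp hde with ⟨-, hdy⟩ | ⟨hdy, hdx⟩
    · -- the path starts at `y`, so `y` is not the head of any of its darts
      have hy : y ∈ w.bypass.support.tail := by
        rw [← Walk.map_snd_darts]
        exact List.mem_map.mpr ⟨d, hd, hdy⟩
      have hnodup := hpath.support_nodup
      rw [← Walk.cons_tail_support] at hnodup
      exact (List.nodup_cons.mp hnodup).1 hy
    · exact O.asymm hxy (hdy ▸ hdx ▸ hdir d hd)
  exact ⟨_, x, _, hcycle, by simpa [hxy] using hdir, rfl⟩

theorem isAcyclic_iff_not_exists_isDirCycle : O.IsAcyclic ↔ ¬ ∃ C, O.IsDirCycle C := by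
  refine ⟨fun hO ⟨C, x, w, hw, hdir, _⟩ => ?_,
    fun hO x hx => hO (O.exists_isDirCycle_of_transGen hx)⟩
  cases w with
  | nil => exact Walk.not_isCycle_nil hw
  | cons h p =>
    simp only [Walk.darts_cons, List.mem_cons, forall_eq_or_imp] at hdir
    exact hO x (TransGen.head' hdir.1 (O.reflTransGen_of_walk p hdir.2))

def rootedAcyclic (G : SimpleGraph V) (v0 : V) : Set (GraphOrientation G) :=
  {O | O.IsConnectedFrom v0 ∧ O.IsAcyclic}

variable {O} {v0 u : V}

theorem not_dir_root (hO : O ∈ rootedAcyclic G v0) (w : V) : ¬ O.dir w v0 :=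
  fun h => hO.2 v0 (TransGen.tail' (hO.1 w) h)

theorem dir_root (hO : O ∈ rootedAcyclic G v0) {w : V} (h : G.Adj v0 w) : O.dir v0 w :=
  (O.dir_or_dir h).resolve_right (not_dir_root hO w)

theorem ncard_rootedAcyclic_of_forall_eq (hV : ∀ x, x = v0) :
    (rootedAcyclic G v0).ncard = 1 := by
  have hempty : ∀ (O : GraphOrientation G) a b, ¬ O.dir a b := fun O a b hab =>
    (O.adj_of_dir a b hab).ne ((hV a).trans (hV b).symm)
  let O₀ : GraphOrientation G :=
    ofTotal (fun _ _ => False) (fun _ _ => False.elim) (fun _ _ => False.elim)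
      (fun a b hab => absurd ((hV a).trans (hV b).symm) hab.ne)
  refine Set.ncard_eq_one.mpr ⟨O₀, Set.eq_singleton_iff_unique_mem.mpr ⟨?_, ?_⟩⟩
  · refine ⟨fun x => hV x ▸ .refl, fun x hx => ?_⟩
    obtain ⟨y, hxy, -⟩ := TransGen.head'_iff.mp hx
    exact hxy
  · exact fun O _ => ext fun a b => iff_of_false (hempty O a b) id

theorem rootedAcyclic_eq_empty_of_isolated (h : ∀ w, ¬ G.Adj v0 w) {x : V} (hx : x ≠ v0) :
    rootedAcyclic G v0 = ∅ :=
  Set.eq_empty_of_forall_notMem fun O hO =>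
    hx ((hO.1 x).eq_of_forall_not_rel fun c hc => h c (O.adj_of_dir _ _ hc))

def restrict (O : GraphOrientation G) {H : SimpleGraph V} (hH : H ≤ G) : GraphOrientation H :=
  ofTotal (fun a b => O.dir a b ∧ H.Adj a b) (fun _ _ h => h.2)
    (fun _ _ h h' => O.asymm h.1 h'.1)
    (fun _ _ h => (O.dir_or_dir (hH h)).imp (⟨·, h⟩) (⟨·, h.symm⟩))

def extendEdge (hadj : G.Adj v0 u) (O : GraphOrientation (G.deleteEdges {s(v0, u)})) :
    GraphOrientation G :=
  ofTotal (fun a b => O.dir a b ∨ a = v0 ∧ b = u)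
    (by
      rintro a b (h | ⟨rfl, rfl⟩)
      · exact (deleteEdges_adj.mp (O.adj_of_dir _ _ h)).1
      · exact hadj)
    (by
      have hne : ∀ a b, O.dir a b → s(a, b) ≠ s(v0, u) := fun a b h => by
        simpa using (deleteEdges_adj.mp (O.adj_of_dir _ _ h)).2
      rintro a b (h | ⟨rfl, rfl⟩) (h' | ⟨h1, h2⟩)
      · exact O.asymm h h'
      · exact hne _ _ h (by rw [h1, h2, Sym2.eq_swap])
      · exact hne _ _ h' Sym2.eq_swap
      · exact hadj.ne h2)
    (by
      intro a b hab
      by_cases he : s(a, b) = s(v0, u)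
      · rcases Sym2.eq_iff.mp he with ⟨rfl, rfl⟩ | ⟨rfl, rfl⟩
        · exact .inl (.inr ⟨rfl, rfl⟩)
        · exact .inr (.inr ⟨rfl, rfl⟩)
      · exact (O.dir_or_dir (deleteEdges_adj.mpr ⟨hab, by simpa using he⟩)).imp .inl .inl)

theorem restrict_extendEdge (hadj : G.Adj v0 u)
    (O : GraphOrientation (G.deleteEdges {s(v0, u)})) :
    (extendEdge hadj O).restrict (G.deleteEdges_le _) = O := by
  ext a b
  refine ⟨fun ⟨h, hab⟩ => h.resolve_right ?_, fun h => ⟨.inl h, O.adj_of_dir _ _ h⟩⟩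
  rintro ⟨rfl, rfl⟩
  simp at hab

theorem dir_restrict_or (hO : O ∈ rootedAcyclic G v0) {a b : V} (h : O.dir a b) :
    (O.restrict (G.deleteEdges_le {s(v0, u)})).dir a b ∨ a = v0 ∧ b = u := by
  by_cases he : s(a, b) = s(v0, u)
  · rcases Sym2.eq_iff.mp he with ⟨rfl, rfl⟩ | ⟨rfl, rfl⟩
    · exact .inr ⟨rfl, rfl⟩
    · exact absurd h (not_dir_root hO a)
  · exact .inl ⟨h, deleteEdges_adj.mpr ⟨O.adj_of_dir _ _ h, by simpa using he⟩⟩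

theorem extendEdge_restrict (hadj : G.Adj v0 u) (hO : O ∈ rootedAcyclic G v0) :
    extendEdge hadj (O.restrict (G.deleteEdges_le _)) = O := by
  ext a b
  refine ⟨?_, dir_restrict_or hO⟩
  rintro (h | ⟨rfl, rfl⟩)
  · exact h.1
  · exact dir_root hO hadj

theorem restrict_mem_rootedAcyclic (hO : O ∈ rootedAcyclic G v0)
    (hu : ∃ w, w ≠ v0 ∧ O.dir w u) :
    O.restrict (G.deleteEdges_le _) ∈ rootedAcyclic (G.deleteEdges {s(v0, u)}) v0 := by
  set R := O.restrict (G.deleteEdges_le {s(v0, u)})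
  obtain ⟨w, hw, hwu⟩ := hu
  -- a path from `v0` to `w` through `v0 → u` would close the cycle `u ⇝ w → u`
  have hRw : ReflTransGen R.dir v0 w :=
    ((hO.1 w).or_of_le_adjoin fun _ _ h => dir_restrict_or hO h).resolve_right
      fun huw => hO.2 u (TransGen.tail' huw hwu)
  have hRu : ReflTransGen R.dir v0 u :=
    hRw.tail ((dir_restrict_or hO hwu).resolve_right fun h => hw h.1)
  refine ⟨fun x => (hO.1 x).lift' id fun a b h => ?_,
    fun x hx => hO.2 x (TransGen.mono (fun _ _ h => h.1) _ _ hx)⟩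
  rcases dir_restrict_or (u := u) hO h with h | ⟨rfl, rfl⟩
  · exact .single h
  · exact hRu

theorem extendEdge_mem_rootedAcyclic (hadj : G.Adj v0 u)
    {O : GraphOrientation (G.deleteEdges {s(v0, u)})}
    (hO : O ∈ rootedAcyclic (G.deleteEdges {s(v0, u)}) v0) :
    extendEdge hadj O ∈ rootedAcyclic G v0 ∧ ∃ w, w ≠ v0 ∧ (extendEdge hadj O).dir w u := by
  have hu : TransGen O.dir v0 u :=
    (reflTransGen_iff_eq_or_transGen.mp (hO.1 u)).resolve_left hadj.ne'
  refine ⟨⟨fun x => ReflTransGen.mono (fun _ _ => .inl) _ _ (hO.1 x), fun x hx => hO.2 x ?_⟩, ?_⟩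
  · refine hx.lift' id fun a b => ?_
    rintro (h | ⟨rfl, rfl⟩)
    · exact .single h
    · exact hu
  · obtain ⟨w, -, hwu⟩ := TransGen.tail'_iff.mp hu
    refine ⟨w, ?_, .inl hwu⟩
    rintro rfl
    simpa using (deleteEdges_adj.mp (O.adj_of_dir _ _ hwu)).2

end GraphOrientation

namespace SimpleGraph

variable {V W : Type*}

theorem fromEdgeSet_image_adj (f : V → W) (S : Set (Sym2 V)) {c d : W} :
    (fromEdgeSet (Sym2.map f '' S)).Adj c d ↔
      c ≠ d ∧ ∃ a b, s(a, b) ∈ S ∧ f a = c ∧ f b = d := by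
  rw [fromEdgeSet_adj, and_comm]
  refine and_congr_right fun _ => ⟨?_, ?_⟩
  · rintro ⟨e, he, hed⟩
    induction e with | h a b => ?_
    rw [Sym2.map_mk, Sym2.eq_iff] at hed
    rcases hed with ⟨rfl, rfl⟩ | ⟨rfl, rfl⟩
    · exact ⟨a, b, he, rfl, rfl⟩
    · exact ⟨b, a, Sym2.eq_swap ▸ he, rfl, rfl⟩
  · rintro ⟨a, b, h, rfl, rfl⟩
    exact ⟨s(a, b), h, rfl⟩

theorem edgeFinset_deleteEdges_singleton [DecidableEq V] {G : SimpleGraph V} [Fintype G.edgeSet]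
    {e : Sym2 V} [Fintype (G.deleteEdges {e}).edgeSet] :
    (G.deleteEdges {e}).edgeFinset = G.edgeFinset.erase e := by
  ext f
  simp [and_comm]

variable [DecidableEq V] {v0 u : V}

def contractMap (hvu : v0 ≠ u) (x : V) : {x : V // x ≠ u} :=
  if h : x = u then ⟨v0, hvu⟩ else ⟨x, h⟩

/-- Parallel edges created by the contraction are merged. -/
def contract (G : SimpleGraph V) (hvu : v0 ≠ u) : SimpleGraph {x : V // x ≠ u} :=
  fromEdgeSet (Sym2.map (contractMap hvu) '' G.edgeSet)

variable (hvu : v0 ≠ u)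

theorem contractMap_of_ne {x : V} (hx : x ≠ u) : contractMap hvu x = ⟨x, hx⟩ := dif_neg hx

theorem contractMap_self : contractMap hvu u = contractMap hvu v0 := by
  rw [contractMap_of_ne hvu hvu, contractMap, dif_pos rfl]

theorem contractMap_val (x : {x : V // x ≠ u}) : contractMap hvu x = x :=
  contractMap_of_ne hvu x.2

theorem contractMap_eq_root_iff {x : V} :
    contractMap hvu x = contractMap hvu v0 ↔ x = v0 ∨ x = u := by
  by_cases hx : x = u
  · simp [hx, contractMap_self]
  · simp [contractMap_of_ne hvu hx, contractMap_of_ne hvu hvu, hx]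

theorem eq_of_contractMap_eq {x y : V} (h : contractMap hvu x = contractMap hvu y)
    (hx : contractMap hvu x ≠ contractMap hvu v0) : x = y := by
  have hxu : x ≠ u := fun h' => hx (h' ▸ contractMap_self hvu)
  have hyu : y ≠ u := fun h' => hx (h.trans (h' ▸ contractMap_self hvu))
  rw [contractMap_of_ne hvu hxu, contractMap_of_ne hvu hyu] at h
  exact congrArg Subtype.val h

theorem contractMap_eq_iff {x y : V} (hxy : x ≠ y) :
    contractMap hvu x = contractMap hvu y ↔ s(x, y) = s(v0, u) := by
  refine ⟨fun h => ?_, fun h => ?_⟩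
  · by_cases hx : contractMap hvu x = contractMap hvu v0
    · rcases (contractMap_eq_root_iff hvu).mp hx with rfl | rfl <;>
        rcases (contractMap_eq_root_iff hvu).mp (h.symm.trans hx) with rfl | rfl
      all_goals first | exact absurd rfl hxy | exact Sym2.eq_swap | rfl
    · exact absurd (eq_of_contractMap_eq hvu h hx) hxy
  · rcases Sym2.eq_iff.mp h with ⟨rfl, rfl⟩ | ⟨rfl, rfl⟩
    · exact (contractMap_self hvu).symm
    · exact contractMap_self hvu

variable {G : SimpleGraph V}

theorem contract_adj_iff {a' b' : {x : V // x ≠ u}} :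
    (G.contract hvu).Adj a' b' ↔
      a' ≠ b' ∧ ∃ a b, G.Adj a b ∧ contractMap hvu a = a' ∧ contractMap hvu b = b' :=
  fromEdgeSet_image_adj _ _

theorem edgeFinset_contract [Fintype G.edgeSet] [Fintype (G.contract hvu).edgeSet] :
    (G.contract hvu).edgeFinset =
      (G.edgeFinset.erase s(v0, u)).image (Sym2.map (contractMap hvu)) := by
  ext f'
  induction f' with | h c d => ?_
  simp only [mem_edgeFinset, mem_edgeSet, contract_adj_iff, Finset.mem_image, Finset.mem_erase]
  constructor
  · rintro ⟨hne, a, b, hab, rfl, rfl⟩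
    exact ⟨s(a, b), ⟨fun he => hne ((contractMap_eq_iff hvu hab.ne).mpr he), hab⟩, rfl⟩
  · rintro ⟨f, ⟨hfe, hf⟩, hfcd⟩
    induction f with | h a b => ?_
    have hπ : contractMap hvu a ≠ contractMap hvu b :=
      fun h => hfe ((contractMap_eq_iff hvu (G.ne_of_adj hf)).mp h)
    rcases Sym2.eq_iff.mp hfcd with ⟨rfl, rfl⟩ | ⟨rfl, rfl⟩
    · exact ⟨hπ, a, b, hf, rfl, rfl⟩
    · exact ⟨hπ.symm, b, a, G.adj_symm hf, rfl, rfl⟩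

theorem connected_fromEdgeSet_insert_iff (T : Set (Sym2 V)) :
    (fromEdgeSet (insert s(v0, u) T)).Connected ↔
      (fromEdgeSet (Sym2.map (contractMap hvu) '' T)).Connected := by
  refine ⟨fun h => ?_, fun h => ?_⟩
  · refine (connected_iff_exists_forall_reachable _).mpr ⟨contractMap hvu v0, fun x' => ?_⟩
    rw [← contractMap_val hvu x', reachable_iff_reflTransGen]
    refine ((reachable_iff_reflTransGen _ _).mp (h.preconnected v0 x')).lift' _ fun a b hab => ?_
    obtain ⟨hmem, hne⟩ := (fromEdgeSet_adj _).mp hab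
    by_cases hπ : contractMap hvu a = contractMap hvu b
    · rw [Function.onFun, hπ]
    · refine .single ((fromEdgeSet_image_adj _ _).mpr ⟨hπ, a, b, ?_, rfl, rfl⟩)
      exact (Set.mem_insert_iff.mp hmem).resolve_left
        fun he => hπ ((contractMap_eq_iff hvu hne).mpr he)
  · refine (connected_iff_exists_forall_reachable _).mpr ⟨v0, fun x => ?_⟩
    rw [reachable_iff_reflTransGen]
    refine ReflTransGen.of_map (f := contractMap hvu) (fun c d hcd => ?_) (fun x y hxy hx => ?_)
      ((reachable_iff_reflTransGen _ _).mp (h.preconnected _ _))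
    · obtain ⟨hne, a, b, hab, rfl, rfl⟩ := (fromEdgeSet_image_adj _ _).mp hcd
      exact ⟨a, b, rfl, rfl,
        (fromEdgeSet_adj _).mpr ⟨Set.mem_insert_of_mem _ hab, fun h => hne (h ▸ rfl)⟩⟩
    · by_cases hxy' : x = y
      · exact hxy' ▸ hx
      · refine hx.tail ((fromEdgeSet_adj _).mpr ⟨?_, hxy'⟩)
        rw [(contractMap_eq_iff hvu hxy').mp hxy]
        exact Set.mem_insert _ _

end SimpleGraph

namespace GraphOrientation

variable {V : Type*} [DecidableEq V] {G : SimpleGraph V} {v0 u : V}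

def IsContractible (O : GraphOrientation G) (hvu : v0 ≠ u) : Prop :=
  ∀ c d, O.dir c d → contractMap hvu d = contractMap hvu v0 →
    contractMap hvu c = contractMap hvu v0

/-- This is what makes the pushforward `GraphOrientation.contract` an orientation. -/
theorem IsContractible.contractMap_eq {hvu : v0 ≠ u} {O : GraphOrientation G}
    (hO : O.IsContractible hvu) {a b c d : V} (hab : O.dir a b) (hcd : O.dir c d)
    (had : contractMap hvu a = contractMap hvu d) (hbc : contractMap hvu b = contractMap hvu c) :
    contractMap hvu a = contractMap hvu b := by
  by_cases ha : contractMap hvu a = contractMap hvu v0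
  · rw [ha, hbc, hO c d hcd (had ▸ ha)]
  · by_cases hb : contractMap hvu b = contractMap hvu v0
    · exact absurd (hO a b hab hb) ha
    · obtain rfl := eq_of_contractMap_eq hvu had ha
      obtain rfl := eq_of_contractMap_eq hvu hbc hb
      exact absurd hcd (O.asymm hab)

def contract (O : GraphOrientation G) (hvu : v0 ≠ u) (hO : O.IsContractible hvu) :
    GraphOrientation (G.contract hvu) :=
  ofTotal
    (fun a' b' => a' ≠ b' ∧ ∃ a b, O.dir a b ∧ contractMap hvu a = a' ∧ contractMap hvu b = b')
    (fun _ _ ⟨hne, a, b, h, ha, hb⟩ =>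
      (contract_adj_iff hvu).mpr ⟨hne, a, b, O.adj_of_dir _ _ h, ha, hb⟩)
    (by
      rintro _ _ ⟨hne, a, b, hab, rfl, rfl⟩ ⟨-, c, d, hcd, hc, hd⟩
      exact hne (hO.contractMap_eq hab hcd hd.symm hc.symm))
    (by
      intro a' b' h
      obtain ⟨hne, a, b, hab, rfl, rfl⟩ := (contract_adj_iff hvu).mp h
      exact (O.dir_or_dir hab).imp (fun h => ⟨hne, a, b, h, rfl, rfl⟩)
        (fun h => ⟨hne.symm, b, a, h, rfl, rfl⟩))

def liftContract (hadj : G.Adj v0 u) (O : GraphOrientation (G.contract hadj.ne)) :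
    GraphOrientation G :=
  ofTotal
    (fun a b => a = v0 ∧ b = u ∨
      G.Adj a b ∧ O.dir (contractMap hadj.ne a) (contractMap hadj.ne b))
    (by
      rintro a b (⟨rfl, rfl⟩ | h)
      exacts [hadj, h.1])
    (by
      have hloop : ¬ O.dir (contractMap hadj.ne u) (contractMap hadj.ne v0) := by
        rw [contractMap_self]
        exact O.irrefl _
      rintro a b (⟨rfl, rfl⟩ | ⟨-, h⟩) (⟨h1, h2⟩ | ⟨-, h'⟩)
      · exact hadj.ne h1.symm
      · exact hloop h'
      · rw [h1, h2] at h
        exact hloop h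
      · exact O.asymm h h')
    (by
      intro a b hab
      by_cases hπ : contractMap hadj.ne a = contractMap hadj.ne b
      · rcases Sym2.eq_iff.mp ((contractMap_eq_iff hadj.ne hab.ne).mp hπ) with
          ⟨rfl, rfl⟩ | ⟨rfl, rfl⟩
        · exact .inl (.inl ⟨rfl, rfl⟩)
        · exact .inr (.inl ⟨rfl, rfl⟩)
      · exact (O.dir_or_dir ((contract_adj_iff _).mpr ⟨hπ, a, b, hab, rfl, rfl⟩)).imp
          (fun h => .inr ⟨hab, h⟩) (fun h => .inr ⟨hab.symm, h⟩))

variable {O : GraphOrientation G}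

theorem isContractible_of_forall_dir (hO : O ∈ rootedAcyclic G v0) (hvu : v0 ≠ u)
    (hu : ∀ w, O.dir w u → w = v0) : O.IsContractible hvu := by
  intro c d h hd
  rcases (contractMap_eq_root_iff hvu).mp hd with rfl | rfl
  · exact absurd h (not_dir_root hO c)
  · rw [hu c h]

theorem contract_mem_rootedAcyclic (hadj : G.Adj v0 u) (hO : O ∈ rootedAcyclic G v0)
    (hc : O.IsContractible hadj.ne) :
    O.contract hadj.ne hc ∈ rootedAcyclic (G.contract hadj.ne) (contractMap hadj.ne v0) := by
  refine ⟨fun x' => ?_, fun x' hx => hO.2 _ (hx.lift' Subtype.val ?_)⟩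
  · rw [← contractMap_val hadj.ne x']
    refine (hO.1 x'.1).lift' _ fun a b hab => ?_
    by_cases hπ : contractMap hadj.ne a = contractMap hadj.ne b
    · rw [Function.onFun, hπ]
    · exact .single ⟨hπ, a, b, hab, rfl, rfl⟩
  · rintro _ _ ⟨hne, a, b, hab, rfl, rfl⟩
    have hbu : b ≠ u := by
      rintro rfl
      exact hne ((hc a _ hab (contractMap_self _)).trans (contractMap_self _).symm)
    show TransGen O.dir (contractMap hadj.ne a).1 (contractMap hadj.ne b).1
    rw [contractMap_of_ne hadj.ne hbu]
    by_cases hau : a = u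
    · -- an edge leaving the merged vertex from `u` is preceded by `v0 → u`
      rw [hau, contractMap_self, contractMap_of_ne hadj.ne hadj.ne]
      exact .head (dir_root hO hadj) (.single (hau ▸ hab))
    · rw [contractMap_of_ne hadj.ne hau]
      exact .single hab

theorem liftContract_mem_rootedAcyclic (hadj : G.Adj v0 u)
    {O : GraphOrientation (G.contract hadj.ne)}
    (hO : O ∈ rootedAcyclic (G.contract hadj.ne) (contractMap hadj.ne v0)) :
    liftContract hadj O ∈ rootedAcyclic G v0 ∧ ∀ w, (liftContract hadj O).dir w u → w = v0 := by
  have hsource : ∀ w, ¬ (liftContract hadj O).dir w v0 := by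
    rintro w (⟨-, h⟩ | ⟨-, h⟩)
    · exact hadj.ne h
    · exact not_dir_root hO _ h
  refine ⟨⟨fun x => ?_, fun x hx => ?_⟩, ?_⟩
  · refine ReflTransGen.of_map (f := contractMap hadj.ne) (fun c d hcd => ?_)
      (fun x y hxy hx => ?_) (hO.1 (contractMap hadj.ne x))
    · obtain ⟨-, a, b, hab, rfl, rfl⟩ := (contract_adj_iff _).mp (O.adj_of_dir _ _ hcd)
      exact ⟨a, b, rfl, rfl, .inr ⟨hab, hcd⟩⟩
    · by_cases hxy' : x = y
      · exact hxy' ▸ hx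
      rcases Sym2.eq_iff.mp ((contractMap_eq_iff _ hxy').mp hxy) with ⟨-, rfl⟩ | ⟨-, rfl⟩
      · exact .single (.inl ⟨rfl, rfl⟩)
      · exact .refl
  · have hx0 : x ≠ v0 := by
      obtain ⟨y, -, hyx⟩ := TransGen.tail'_iff.mp hx
      rintro rfl
      exact hsource y hyx
    -- `v0` is a source, so the edge `v0 → u`, collapsed by `contractMap`, lies on no cycle
    refine hO.2 _ ((hx.restrict_of_forall_not_rel hsource hx0).lift (contractMap hadj.ne) ?_)
    rintro a b ⟨⟨rfl, -⟩ | ⟨-, h⟩, ha⟩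
    · exact absurd rfl ha
    · exact h
  · rintro w (⟨rfl, -⟩ | ⟨-, h⟩)
    · rfl
    · rw [contractMap_self] at h
      exact absurd h (not_dir_root hO _)

theorem contract_liftContract (hadj : G.Adj v0 u) (O : GraphOrientation (G.contract hadj.ne))
    (hc : (liftContract hadj O).IsContractible hadj.ne) :
    (liftContract hadj O).contract hadj.ne hc = O := by
  ext a' b'
  refine ⟨?_, fun h => ?_⟩
  · rintro ⟨hne, a, b, ⟨rfl, rfl⟩ | ⟨-, h⟩, rfl, rfl⟩
    · exact absurd (contractMap_self _).symm hne
    · exact h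
  · obtain ⟨hne, a, b, hab, rfl, rfl⟩ := (contract_adj_iff _).mp (O.adj_of_dir _ _ h)
    exact ⟨hne, a, b, .inr ⟨hab, h⟩, rfl, rfl⟩

theorem liftContract_contract (hadj : G.Adj v0 u) (hO : O ∈ rootedAcyclic G v0)
    (hc : O.IsContractible hadj.ne) : liftContract hadj (O.contract hadj.ne hc) = O := by
  ext a b
  refine ⟨?_, fun h => ?_⟩
  · rintro (⟨rfl, rfl⟩ | ⟨hab, hne, c, d, hcd, hca, hdb⟩)
    · exact dir_root hO hadj
    · refine (O.dir_or_dir hab).resolve_right fun hba => hne ?_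
      rw [← hca, ← hdb]
      exact hc.contractMap_eq hcd hba hca hdb
  · by_cases hπ : contractMap hadj.ne a = contractMap hadj.ne b
    · rcases Sym2.eq_iff.mp ((contractMap_eq_iff hadj.ne (O.adj_of_dir _ _ h).ne).mp hπ) with
        ⟨rfl, rfl⟩ | ⟨rfl, rfl⟩
      · exact .inl ⟨rfl, rfl⟩
      · exact absurd h (not_dir_root hO _)
    · exact .inr ⟨O.adj_of_dir _ _ h, hπ, a, b, h, rfl, rfl⟩

theorem ncard_rootedAcyclic_eq_add [Finite V] (hadj : G.Adj v0 u) :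
    (rootedAcyclic G v0).ncard = (rootedAcyclic (G.deleteEdges {s(v0, u)}) v0).ncard +
      (rootedAcyclic (G.contract hadj.ne) (contractMap hadj.ne v0)).ncard := by
  rw [← Set.ncard_inter_add_ncard_sdiff_eq_ncard _ {O | ∃ w, w ≠ v0 ∧ O.dir w u}]
  congr 1
  · exact Set.ncard_congr (fun O _ => O.restrict (G.deleteEdges_le _))
      (fun O hO => restrict_mem_rootedAcyclic hO.1 hO.2)
      (fun O O' hO hO' h => by
        rw [← extendEdge_restrict hadj hO.1, h, extendEdge_restrict hadj hO'.1])
      (fun O hO => ⟨extendEdge hadj O, extendEdge_mem_rootedAcyclic hadj hO,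
        restrict_extendEdge hadj O⟩)
  · have hc : ∀ O ∈ rootedAcyclic G v0 \ {O | ∃ w, w ≠ v0 ∧ O.dir w u},
        O.IsContractible hadj.ne :=
      fun O hO => isContractible_of_forall_dir hO.1 hadj.ne
        fun w hw => by_contra fun h => hO.2 ⟨w, h, hw⟩
    exact Set.ncard_congr (fun O hO => O.contract hadj.ne (hc O hO))
      (fun O hO => contract_mem_rootedAcyclic hadj hO.1 (hc O hO))
      (fun O O' hO hO' h => by
        rw [← liftContract_contract hadj hO.1 (hc O hO), h,
          liftContract_contract hadj hO'.1 (hc O' hO')])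
      (fun O hO => ⟨liftContract hadj O,
        ⟨(liftContract_mem_rootedAcyclic hadj hO).1,
          fun ⟨w, hw, hwu⟩ => hw ((liftContract_mem_rootedAcyclic hadj hO).2 w hwu)⟩,
        contract_liftContract hadj O _⟩)

end GraphOrientation

namespace Finset

variable {α β : Type*} [DecidableEq α] [DecidableEq β]

/-- Inclusion–exclusion over the fibres of `φ`; each fibre contributes `∑_{∅ ≠ X} (-1)^|X| = -1`. -/
theorem sum_powerset_filter_image_eq (φ : α → β) (P : Finset α) :
    ∑ T ∈ P.powerset with T.image φ = P.image φ, (-1 : ℤ) ^ T.card =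
      (-1) ^ (P.image φ).card := by
  set Q := P.image φ
  calc ∑ T ∈ P.powerset with T.image φ = Q, (-1 : ℤ) ^ T.card
      = ∑ T ∈ P.powerset, ∑ R ∈ (Q \ T.image φ).powerset, (-1 : ℤ) ^ T.card * (-1) ^ R.card := by
        rw [sum_filter]
        refine sum_congr rfl fun T hT => ?_
        rw [← mul_sum, sum_powerset_neg_one_pow_card, mul_ite, mul_one, mul_zero]
        refine if_congr ⟨fun h => sdiff_eq_empty_iff_subset.mpr h.ge, fun h => ?_⟩ rfl rfl
        exact subset_antisymm (image_subset_image (mem_powerset.mp hT))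
          (sdiff_eq_empty_iff_subset.mp h)
    _ = ∑ R ∈ Q.powerset, ∑ T ∈ (P.filter (φ · ∉ R)).powerset,
          (-1 : ℤ) ^ T.card * (-1) ^ R.card := by
        refine sum_comm' fun T R => ?_
        simp only [mem_powerset, subset_iff, mem_filter, mem_sdiff, mem_image]
        grind
    _ = ∑ R ∈ Q.powerset, if R = Q then (-1 : ℤ) ^ R.card else 0 := by
        refine sum_congr rfl fun R hR => ?_
        have hempty : P.filter (φ · ∉ R) = ∅ ↔ R = Q := by
          rw [filter_eq_empty_iff, subset_antisymm_iff, and_iff_right (mem_powerset.mp hR)]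
          simp [Q, subset_iff]
        rw [← sum_mul, sum_powerset_neg_one_pow_card]
        simp [hempty]
    _ = (-1) ^ Q.card := by simp

theorem sum_powerset_filter_image (φ : α → β) (P : Finset α) (p : Finset β → Prop)
    [DecidablePred p] :
    ∑ T ∈ P.powerset with p (T.image φ), (-1 : ℤ) ^ T.card =
      ∑ S ∈ (P.image φ).powerset with p S, (-1 : ℤ) ^ S.card := by
  rw [← sum_fiberwise_of_maps_to (g := fun T => T.image φ) (t := (P.image φ).powerset.filter p)
    fun T hT => by
      obtain ⟨hTP, hpT⟩ := mem_filter.mp hT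
      exact mem_filter.mpr ⟨mem_powerset.mpr (image_subset_image (mem_powerset.mp hTP)), hpT⟩]
  refine sum_congr rfl fun S hS => ?_
  obtain ⟨hSP, hpS⟩ := mem_filter.mp hS
  have himage : (P.filter (φ · ∈ S)).image φ = S := by
    refine subset_antisymm (fun b hb => ?_) fun b hb => ?_
    · obtain ⟨a, ha, rfl⟩ := mem_image.mp hb
      exact (mem_filter.mp ha).2
    · obtain ⟨a, ha, rfl⟩ := mem_image.mp (mem_powerset.mp hSP hb)
      exact mem_image_of_mem φ (mem_filter.mpr ⟨ha, hb⟩)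
  rw [← himage, ← sum_powerset_filter_image_eq, himage]
  congr 1
  ext T
  simp only [mem_filter, mem_powerset, subset_iff]
  constructor
  · rintro ⟨⟨hTP, -⟩, rfl⟩
    exact ⟨fun a ha => ⟨hTP ha, mem_image_of_mem φ ha⟩, rfl⟩
  · rintro ⟨hTP, rfl⟩
    exact ⟨⟨fun a ha => (hTP ha).1, hpS⟩, rfl⟩

end Finset

namespace SimpleGraph

open Finset

variable {V : Type*}

open Classical in
noncomputable def connectedSignSum (E : Finset (Sym2 V)) : ℤ :=
  ∑ S ∈ E.powerset.filter (fun S : Finset (Sym2 V) => (fromEdgeSet (S : Set (Sym2 V))).Connected),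
    (-1) ^ S.card

open Classical in
theorem connectedSignSum_insert [DecidableEq V] {e : Sym2 V} {E : Finset (Sym2 V)} (he : e ∉ E) :
    connectedSignSum (insert e E) = connectedSignSum E -
      ∑ T ∈ E.powerset.filter
          (fun T : Finset (Sym2 V) => (fromEdgeSet (insert e (T : Set (Sym2 V)))).Connected),
        (-1) ^ T.card := by
  simp only [connectedSignSum, sum_filter]
  rw [sum_powerset_insert he, sub_eq_add_neg, ← sum_neg_distrib]
  congr 1
  refine sum_congr rfl fun T hT => ?_
  rw [coe_insert, card_insert_of_notMem fun h => he (mem_powerset.mp hT h), pow_succ]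
  split_ifs <;> ring

theorem connectedSignSum_eq_zero_of_isolated {G : SimpleGraph V} [Fintype G.edgeSet] {v0 x : V}
    (h : ∀ w, ¬ G.Adj v0 w) (hx : x ≠ v0) : connectedSignSum G.edgeFinset = 0 := by
  classical
  refine sum_eq_zero fun S hS => absurd ?_ hx
  obtain ⟨hSE, hconn⟩ := mem_filter.mp hS
  refine ((reachable_iff_reflTransGen _ _).mp (hconn.preconnected v0 x)).eq_of_forall_not_rel
    fun w hw => h w ?_
  exact mem_edgeFinset.mp (mem_powerset.mp hSE ((fromEdgeSet_adj _).mp hw).1)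

theorem connectedSignSum_of_forall_eq {G : SimpleGraph V} [Fintype G.edgeSet] {v0 : V}
    (hV : ∀ x, x = v0) : connectedSignSum G.edgeFinset = 1 := by
  have : Subsingleton V := ⟨fun a b => (hV a).trans (hV b).symm⟩
  have : Nonempty V := ⟨v0⟩
  have hG : G = ⊥ := by
    ext a b
    exact iff_of_false (fun h => h.ne (Subsingleton.elim a b)) id
  rw [connectedSignSum, edgeFinset_eq_empty.mpr hG, powerset_empty, filter_singleton,
    if_pos Connected.of_subsingleton]
  simp

theorem connectedSignSum_eq_sub [DecidableEq V] {G : SimpleGraph V} {v0 u : V}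
    (hadj : G.Adj v0 u) [Fintype G.edgeSet] [Fintype (G.deleteEdges {s(v0, u)}).edgeSet]
    [Fintype (G.contract hadj.ne).edgeSet] :
    connectedSignSum G.edgeFinset = connectedSignSum (G.deleteEdges {s(v0, u)}).edgeFinset -
      connectedSignSum (G.contract hadj.ne).edgeFinset := by
  classical
  have he : s(v0, u) ∈ G.edgeFinset := mem_edgeFinset.mpr hadj
  rw [← insert_erase he, connectedSignSum_insert (notMem_erase _ _),
    edgeFinset_deleteEdges_singleton, edgeFinset_contract]
  congr 1
  simp_rw [connected_fromEdgeSet_insert_iff hadj.ne, ← coe_image]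
  exact sum_powerset_filter_image _ _ fun S : Finset (Sym2 {x : V // x ≠ u}) =>
    (fromEdgeSet (S : Set (Sym2 {x : V // x ≠ u}))).Connected

end SimpleGraph

open GraphOrientation

theorem ncard_rootedAcyclic_eq_connectedSignSum {V : Type*} [Fintype V] [DecidableEq V]
    (G : SimpleGraph V) [Fintype G.edgeSet] (v0 : V) :
    ((rootedAcyclic G v0).ncard : ℤ) =
      (-1) ^ (Fintype.card V + 1) * connectedSignSum G.edgeFinset := by
  induction hn : G.edgeFinset.card using Nat.strong_induction_on generalizing V with
  | _ n ih =>
  by_cases hisol : ∃ u, G.Adj v0 u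
  · obtain ⟨u, hadj⟩ := hisol
    classical
    have he : s(v0, u) ∈ G.edgeFinset := mem_edgeFinset.mpr hadj
    have hdel : (G.deleteEdges {s(v0, u)}).edgeFinset.card < n := by
      rw [edgeFinset_deleteEdges_singleton, ← hn]
      exact Finset.card_erase_lt_of_mem he
    have hcon : (G.contract hadj.ne).edgeFinset.card < n := by
      rw [edgeFinset_contract, ← hn]
      exact Finset.card_image_le.trans_lt (Finset.card_erase_lt_of_mem he)
    have hcard : Fintype.card V = Fintype.card {x : V // x ≠ u} + 1 := by
      rw [Fintype.card_subtype_compl, Fintype.card_subtype_eq]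
      have := Fintype.card_pos_iff.mpr ⟨u⟩
      omega
    rw [ncard_rootedAcyclic_eq_add hadj, Nat.cast_add, ih _ hdel _ _ rfl, ih _ hcon _ _ rfl,
      connectedSignSum_eq_sub hadj, hcard]
    ring
  · push Not at hisol
    by_cases hV : ∀ x, x = v0
    · rw [ncard_rootedAcyclic_of_forall_eq hV, connectedSignSum_of_forall_eq hV,
        Fintype.card_eq_one_iff.mpr ⟨v0, hV⟩]
      norm_num
    · push Not at hV
      obtain ⟨x, hx⟩ := hV
      rw [rootedAcyclic_eq_empty_of_isolated hisol hx,
        connectedSignSum_eq_zero_of_isolated hisol hx]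
      simp

theorem units_neg_one_zpow_sub (k n : ℕ) :
    (((-1 : ℤˣ) ^ ((k : ℤ) + 1 - n) : ℤˣ) : ℤ) = (-1) ^ (n + 1) * (-1) ^ k := by
  have h : (k : ℤ) + 1 - n = ((k + n + 1 : ℕ) : ℤ) + (-2 : ℤ) * n := by
    push_cast
    ring
  rw [h, zpow_add, zpow_mul, zpow_natCast, zpow_natCast,
    show ((-1 : ℤˣ) ^ (-2 : ℤ)) = 1 by decide]
  simp only [one_pow, mul_one, Units.val_pow_eq_pow_val, Units.val_neg, Units.val_one]
  ring

open Classical in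
theorem statement18_general {V : Type*} [Fintype V] [DecidableEq V] (G : SimpleGraph V)
    [DecidableRel G.Adj] (v0 : V) :
    ({O : GraphOrientation G | O.IsConnectedFrom v0 ∧
        ¬ ∃ C : Set (Sym2 V), O.IsDirCycle C}.ncard : ℤ) =
      ∑ S ∈ G.edgeFinset.powerset.filter
          (fun S : Finset (Sym2 V) => (SimpleGraph.fromEdgeSet (↑S : Set (Sym2 V))).Connected),
        ((((-1 : ℤˣ) ^ ((S.card : ℤ) + 1 - (Fintype.card V : ℤ)) : ℤˣ)) : ℤ) := by
  have hset : {O : GraphOrientation G | O.IsConnectedFrom v0 ∧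
      ¬ ∃ C : Set (Sym2 V), O.IsDirCycle C} = rootedAcyclic G v0 := by
    simp only [rootedAcyclic, isAcyclic_iff_not_exists_isDirCycle]
  rw [hset, ncard_rootedAcyclic_eq_connectedSignSum, connectedSignSum, Finset.mul_sum]
  refine Finset.sum_congr ?_ fun S _ => (units_neg_one_zpow_sub _ _).symm
  congr

open Classical in
theorem statement18 {V : Type*} [Fintype V] [DecidableEq V] (G : SimpleGraph V)
    [DecidableRel G.Adj] (hG : G.Connected) (v0 : V) :
    ({O : GraphOrientation G | O.IsConnectedFrom v0 ∧
        ¬ ∃ C : Set (Sym2 V), O.IsDirCycle C}.ncard : ℤ) =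
      ∑ S ∈ G.edgeFinset.powerset.filter
          (fun S : Finset (Sym2 V) => (SimpleGraph.fromEdgeSet (↑S : Set (Sym2 V))).Connected),
        ((((-1 : ℤˣ) ^ ((S.card : ℤ) + 1 - (Fintype.card V : ℤ)) : ℤˣ)) : ℤ) :=
  statement18_general G v0
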